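/- arXiv:2308.14653 — 10 statements merged into one kernel-verified Lean document; each statement's English description precedes it below -/
import Mathlib

section
/- Let A be a nonassociative algebra containing an étale subalgebra K of dimension n in its nucleus, with dim A finite. Then any two of the following imply the third: (1) A is faithful as a K⊗K-module under (k⊗k')a = kak', (2) A is cyclic as a K⊗K-module, (3) dim_F A = (dim_F K)^2. -/
open scoped TensorProduct

/-- The nucleus of a (possibly nonassociative) algebra. -/
def nucleus (A : Type*) [Mul A] : Set A :=
  {x | (∀ y z : A, x * y * z = x * (y * z)) ∧ (∀ y z : A, y * x * z = y * (x * z)) ∧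
       (∀ y z : A, y * z * x = y * (z * x))}

/-- The action of `K ⊗ K` on `A` by left and right multiplication through `j : K →ₗ A`:
`(k ⊗ k') • a = (j k) a (j k')`. -/
noncomputable def biAct {F K A : Type*} [Field F] [Ring K] [Algebra F K]
    [NonUnitalNonAssocRing A] [Module F A] [SMulCommClass F A A] [IsScalarTower F A A]
    (j : K →ₗ[F] A) : K ⊗[F] K →ₗ[F] A →ₗ[F] A :=
  TensorProduct.lift <| LinearMap.mk₂ F
    (fun k k' => (LinearMap.mulRight F (j k')).comp (LinearMap.mulLeft F (j k)))
    (fun k₁ k₂ k' => by ext a; simp [add_mul])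
    (fun s k k' => by ext a; simp [smul_mul_assoc])
    (fun k k₁' k₂' => by ext a; simp [mul_add])
    (fun s k k' => by ext a; simp [mul_smul_comm])

/-!
Since `K` is étale, `K ⊗ K` is a finite-dimensional commutative semisimple `F`-algebra, and
`(k ⊗ k') • a = k a k'` makes `A` a `K ⊗ K`-module because `K` lies in the nucleus. For a module
`M` over a commutative `F`-algebra `R` and `v ∈ M`, the `F`-linear map `r ↦ r • v : R → M` has
kernel the annihilator of `v` and image `R v`; when `R v = M` the annihilator of `v` is that of `M`.
So faithful and cyclic make this map bijective, and cyclic with `dim M = dim R` makes the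
surjection injective. Finally, over a semisimple commutative ring a faithful module has an element
with zero annihilator, so faithful with `dim M = dim R` makes the injection surjective.
-/

open Module Submodule
open Ideal (torsionOf mem_torsionOf_iff)

theorem faithfulSMul_iff_forall_smul_eq_zero {R M : Type*} [Ring R] [AddCommGroup M]
    [Module R M] : FaithfulSMul R M ↔ ∀ r : R, (∀ m : M, r • m = 0) → r = 0 := by
  simp only [← annihilator_eq_bot, Submodule.eq_bot_iff, Module.mem_annihilator]

theorem span_singleton_eq_top_iff_forall_exists_smul_eq {R M : Type*} [Semiring R]
    [AddCommMonoid M] [Module R M] {v : M} : R ∙ v = ⊤ ↔ ∀ m : M, ∃ r : R, r • v = m := by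
  simp only [Submodule.eq_top_iff', mem_span_singleton]

section Torsion

variable {R M : Type*} [CommRing R] [AddCommGroup M] [Module R M]

theorem torsionOf_add_idempotent_smul {e : R} (he : IsIdempotentElem e) {v : M} (hv : e • v = 0)
    (w : M) : torsionOf R M (v + e • w) = torsionOf R M v ⊓ torsionOf R M (e • w) := by
  ext x
  simp only [Submodule.mem_inf, mem_torsionOf_iff, smul_add]
  refine ⟨fun h => ?_, fun ⟨h₁, h₂⟩ => by rw [h₁, h₂, add_zero]⟩
  have hew : x • e • w = 0 := by
    simpa [smul_comm e x, hv, ← mul_smul e e, he.eq] using congrArg (e • ·) h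
  exact ⟨by simpa [hew] using h, hew⟩

theorem torsionOf_eq_annihilator_of_span_singleton_eq_top {v : M} (hv : R ∙ v = ⊤) :
    torsionOf R M v = annihilator R M := by
  rw [← Ideal.annihilator_span_singleton_eq_torsionOf, hv, annihilator_top]

theorem exists_torsionOf_eq_bot [IsSemisimpleRing R] [FaithfulSMul R M] :
    ∃ v : M, torsionOf R M v = ⊥ := by
  obtain ⟨_, ⟨v, rfl⟩, hmin⟩ :=
    (wellFounded_lt (α := Ideal R)).has_min (Set.range (torsionOf R M)) ⟨_, 0, rfl⟩
  -- The annihilator of `v` is minimal and is generated by an idempotent `e`; perturbing `v` by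
  -- `e • w` could only shrink it, which forces `e • w = 0` for all `w`, so `e = 0`.
  obtain ⟨e, he, hspan⟩ := IsSemisimpleRing.ideal_eq_span_idempotent (torsionOf R M v)
  have hev : e ∈ torsionOf R M v := hspan ▸ Ideal.subset_span rfl
  have he_smul : ∀ w : M, e • w = 0 := fun w => by
    have hle : torsionOf R M v ≤ torsionOf R M (e • w) := by
      by_contra h
      refine hmin _ ⟨v + e • w, rfl⟩ ?_
      rw [torsionOf_add_idempotent_smul he hev]
      exact inf_lt_left.mpr h
    simpa [smul_smul, he.eq] using hle hev
  have he0 : e = 0 := eq_of_smul_eq_smul (α := M) fun w => by rw [he_smul, zero_smul]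
  exact ⟨v, by rw [hspan, he0, Set.singleton_zero, Ideal.span_zero]⟩

end Torsion

section Finrank

variable {F R M : Type*} [Field F] [CommRing R] [Algebra F R] [AddCommGroup M] [Module F M]
  [Module R M] [IsScalarTower F R M]

theorem finrank_eq_of_span_singleton_eq_top [FaithfulSMul R M] {v : M} (hv : R ∙ v = ⊤) :
    finrank F M = finrank F R := by
  have hinj : Function.Injective (LinearMap.toSpanSingleton R M v) := by
    rw [← LinearMap.ker_eq_bot]
    exact (torsionOf_eq_annihilator_of_span_singleton_eq_top hv).trans
      (annihilator_eq_bot.mpr ‹_›)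
  have hsurj : Function.Surjective (LinearMap.toSpanSingleton R M v) := by
    rw [← LinearMap.range_eq_top, LinearMap.range_toSpanSingleton, hv]
  exact (LinearEquiv.ofBijective ((LinearMap.toSpanSingleton R M v).restrictScalars F)
    ⟨hinj, hsurj⟩).finrank_eq.symm

variable [FiniteDimensional F R] [FiniteDimensional F M]

theorem faithfulSMul_of_span_singleton_eq_top {v : M} (hv : R ∙ v = ⊤)
    (hd : finrank F M = finrank F R) : FaithfulSMul R M := by
  have hsurj : Function.Surjective ((LinearMap.toSpanSingleton R M v).restrictScalars F) := by
    rw [LinearMap.coe_restrictScalars, ← LinearMap.range_eq_top,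
      LinearMap.range_toSpanSingleton, hv]
  have hinj := (LinearMap.injective_iff_surjective_of_finrank_eq_finrank hd.symm).mpr hsurj
  rw [← annihilator_eq_bot, ← torsionOf_eq_annihilator_of_span_singleton_eq_top hv]
  exact LinearMap.ker_eq_bot.mpr hinj

theorem exists_span_singleton_eq_top [IsSemisimpleRing R] [FaithfulSMul R M]
    (hd : finrank F M = finrank F R) : ∃ v : M, R ∙ v = ⊤ := by
  obtain ⟨v, hv⟩ := exists_torsionOf_eq_bot (R := R) (M := M)
  have hinj : Function.Injective (LinearMap.toSpanSingleton R M v) := LinearMap.ker_eq_bot.mp hv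
  have hsurj := (LinearMap.injective_iff_surjective_of_finrank_eq_finrank hd.symm
    (f := (LinearMap.toSpanSingleton R M v).restrictScalars F)).mp hinj
  refine ⟨v, ?_⟩
  rw [← LinearMap.range_toSpanSingleton, LinearMap.range_eq_top]
  exact hsurj

end Finrank

theorem isSemisimpleRing_tensorProduct {F K L : Type*} [Field F] [CommRing K] [CommRing L]
    [Algebra F K] [Algebra F L] [Algebra.FormallyUnramified F K] [Algebra.FormallyUnramified F L]
    [FiniteDimensional F K] [FiniteDimensional F L] : IsSemisimpleRing (K ⊗[F] L) := by
  have : Algebra.FormallyUnramified F (K ⊗[F] L) := .comp F K (K ⊗[F] L)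
  have : IsReduced (K ⊗[F] L) := Algebra.FormallyUnramified.isReduced_of_field F _
  have : IsArtinianRing (K ⊗[F] L) := isArtinian_of_tower F inferInstance
  exact IsArtinianRing.isSemisimpleRing_of_isReduced _

theorem biAct_tmul {F K A : Type*} [Field F] [Ring K] [Algebra F K] [NonUnitalNonAssocRing A]
    [Module F A] [SMulCommClass F A A] [IsScalarTower F A A] (j : K →ₗ[F] A) (k k' : K) (a : A) :
    biAct j (k ⊗ₜ[F] k') a = j k * a * j k' := by
  simp [biAct]

section BiAct

variable {F K A : Type*} [Field F] [CommRing K] [Algebra F K] [NonAssocRing A] [Module F A]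
  [SMulCommClass F A A] [IsScalarTower F A A] (j : K →ₗ[F] A)
  (hj_mul : ∀ k k' : K, j (k * k') = j k * j k') (hj_nuc : ∀ k : K, j k ∈ nucleus A)
include hj_mul hj_nuc

theorem biAct_mul (x y : K ⊗[F] K) : biAct j (x * y) = biAct j x * biAct j y := by
  induction x using TensorProduct.induction_on with
  | zero => simp
  | add x₁ x₂ h₁ h₂ => simp only [add_mul, map_add, h₁, h₂]
  | tmul k k' =>
    induction y using TensorProduct.induction_on with
    | zero => simp
    | add y₁ y₂ h₁ h₂ => simp only [mul_add, map_add, h₁, h₂]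
    | tmul l l' =>
      ext a
      simp only [Algebra.TensorProduct.tmul_mul_tmul, Module.End.mul_apply, biAct_tmul, hj_mul]
      have hk := (hj_nuc k).1
      have hl' := (hj_nuc l').2.1
      have hcomm : j k' * j l' = j l' * j k' := by rw [← hj_mul, mul_comm, hj_mul]
      calc j k * j l * a * (j k' * j l')
          = j k * (j l * a) * (j l' * j k') := by rw [hk, hcomm]
        _ = j k * (j l * a * j l') * j k' := by rw [← hl', hk]

noncomputable def biActAlgHom (hj_one : j 1 = 1) : K ⊗[F] K →ₐ[F] Module.End F A :=
  AlgHom.ofLinearMap (biAct j) (by ext a; simp [Algebra.TensorProduct.one_def, biAct_tmul, hj_one])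
    (biAct_mul j hj_mul hj_nuc)

end BiAct

theorem stmt_2_general {F K A : Type} [Field F] [CommRing K] [Algebra F K] [Algebra.Etale F K]
    [FiniteDimensional F K]
    [NonAssocRing A] [Module F A] [SMulCommClass F A A] [IsScalarTower F A A]
    [FiniteDimensional F A]
    (j : K →ₗ[F] A)
    (hj_mul : ∀ k k' : K, j (k * k') = j k * j k') (hj_one : j 1 = 1)
    (hj_nuc : ∀ k : K, j k ∈ nucleus A) :
    ((∀ x : K ⊗[F] K, (∀ a : A, biAct j x a = 0) → x = 0) →
      (∃ v : A, ∀ a : A, ∃ x : K ⊗[F] K, biAct j x v = a) →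
      Module.finrank F A = (Module.finrank F K) ^ 2) ∧
    ((∀ x : K ⊗[F] K, (∀ a : A, biAct j x a = 0) → x = 0) →
      Module.finrank F A = (Module.finrank F K) ^ 2 →
      (∃ v : A, ∀ a : A, ∃ x : K ⊗[F] K, biAct j x v = a)) ∧
    ((∃ v : A, ∀ a : A, ∃ x : K ⊗[F] K, biAct j x v = a) →
      Module.finrank F A = (Module.finrank F K) ^ 2 →
      (∀ x : K ⊗[F] K, (∀ a : A, biAct j x a = 0) → x = 0)) := by
  let : Module (K ⊗[F] K) A := Module.compHom A (biActAlgHom j hj_mul hj_nuc hj_one).toRingHom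
  have : IsScalarTower F (K ⊗[F] K) A :=
    ⟨fun c x a => by change biAct j (c • x) a = c • biAct j x a; simp⟩
  have : IsSemisimpleRing (K ⊗[F] K) := isSemisimpleRing_tensorProduct
  have hdim : finrank F (K ⊗[F] K) = finrank F K ^ 2 := by rw [finrank_tensorProduct, sq]
  have hfaithful : (∀ x : K ⊗[F] K, (∀ a : A, biAct j x a = 0) → x = 0) ↔
      FaithfulSMul (K ⊗[F] K) A :=
    faithfulSMul_iff_forall_smul_eq_zero.symm
  have hcyclic : (∃ v : A, ∀ a : A, ∃ x : K ⊗[F] K, biAct j x v = a) ↔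
      ∃ v : A, (K ⊗[F] K) ∙ v = ⊤ :=
    exists_congr fun _ => span_singleton_eq_top_iff_forall_exists_smul_eq.symm
  rw [hfaithful, hcyclic, ← hdim]
  exact ⟨fun _ ⟨_, hv⟩ => finrank_eq_of_span_singleton_eq_top hv,
    fun _ hd => exists_span_singleton_eq_top hd,
    fun ⟨_, hv⟩ hd => faithfulSMul_of_span_singleton_eq_top hv hd⟩

/-- Three-for-two: for a nonassociative algebra `A` containing an étale subalgebra `K`
(of its nucleus), any two of (faithful over `K ⊗ K`), (cyclic over `K ⊗ K`),
(`dim A = (dim K)²`) imply the third. -/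
theorem stmt_2 {F K A : Type} [Field F] [CommRing K] [Algebra F K] [Algebra.Etale F K]
    [FiniteDimensional F K]
    [NonAssocRing A] [Module F A] [SMulCommClass F A A] [IsScalarTower F A A]
    [FiniteDimensional F A]
    (j : K →ₗ[F] A) (hj_inj : Function.Injective j)
    (hj_mul : ∀ k k' : K, j (k * k') = j k * j k') (hj_one : j 1 = 1)
    (hj_nuc : ∀ k : K, j k ∈ nucleus A) :
    ((∀ x : K ⊗[F] K, (∀ a : A, biAct j x a = 0) → x = 0) →
      (∃ v : A, ∀ a : A, ∃ x : K ⊗[F] K, biAct j x v = a) →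
      Module.finrank F A = (Module.finrank F K) ^ 2) ∧
    ((∀ x : K ⊗[F] K, (∀ a : A, biAct j x a = 0) → x = 0) →
      Module.finrank F A = (Module.finrank F K) ^ 2 →
      (∃ v : A, ∀ a : A, ∃ x : K ⊗[F] K, biAct j x v = a)) ∧
    ((∃ v : A, ∀ a : A, ∃ x : K ⊗[F] K, biAct j x v = a) →
      Module.finrank F A = (Module.finrank F K) ^ 2 →
      (∀ x : K ⊗[F] K, (∀ a : A, biAct j x a = 0) → x = 0)) :=
  stmt_2_general j hj_mul hj_one hj_nuc
end

section
/- Let A be semiassociative over F with respect to K ≅ F^n, i.e. A is minimally faithful over (F^n)⊗(F^n), generated by orthogonal idempotents e_1,…,e_n. Then each e_iAe_j is one-dimensional, and in particular each e_i is a primitive idempotent of the nucleus of A. -/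
/-- If `A` is semiassociative with respect to `K ≅ F^n`, generated by the orthogonal
idempotents `e_1, …, e_n` (so that the `(F^n)⊗(F^n)`-action is faithful and
`dim A = n²`), then each `e_i A e_j` is one-dimensional, and each `e_i` is a primitive
idempotent of the nucleus of `A`. -/
theorem stmt_3 {F A : Type*} [Field F] [NonAssocRing A] [Module F A]
    [SMulCommClass F A A] [IsScalarTower F A A] [FiniteDimensional F A]
    {n : ℕ} (e : Fin n → A)
    (hnuc : ∀ i, e i ∈ nucleus A)
    (hidem : ∀ i, e i * e i = e i)
    (horth : ∀ i j, i ≠ j → e i * e j = 0)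
    (hsum : ∑ i, e i = 1)
    (hfaithful : ∀ i j, ∃ a : A, e i * a * e j ≠ 0)
    (hdim : Module.finrank F A = n ^ 2) :
    (∀ i j, Module.finrank F
        (Submodule.span F {x : A | ∃ a : A, x = e i * a * e j}) = 1) ∧
    (∀ i, ¬ ∃ f g : A, f ∈ nucleus A ∧ g ∈ nucleus A ∧ f ≠ 0 ∧ g ≠ 0 ∧
        f * f = f ∧ g * g = g ∧ f * g = 0 ∧ g * f = 0 ∧ e i = f + g) := by
  classical
  set π : Fin n → Fin n → (A →ₗ[F] A) := fun i j =>
    (LinearMap.mulRight F (e j)).comp (LinearMap.mulLeft F (e i)) with hπdef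
  have hπ : ∀ i j a, π i j a = e i * a * e j := fun i j a => rfl
  set S : Fin n → Fin n → Submodule F A := fun i j =>
    Submodule.span F {x : A | ∃ a : A, x = e i * a * e j} with hSdef
  have mem_S : ∀ i j (a : A), e i * a * e j ∈ S i j := fun i j a =>
    Submodule.subset_span ⟨a, rfl⟩
  -- Fact A : π i j fixes generators of S i j
  have factA : ∀ i j (a : A), π i j (e i * a * e j) = e i * a * e j := by
    intro i j a
    have h1 : e i * (e i * a * e j) = e i * a * e j := by
      rw [← (hnuc j).2.2 (e i) (e i * a), ← (hnuc i).1 (e i) a, hidem i]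
    rw [hπ, h1, (hnuc j).2.1 (e i * a) (e j), hidem j]
  -- Fact B : π i j kills generators of S k l for (k,l) ≠ (i,j)
  have factB : ∀ i j k l, (k, l) ≠ (i, j) → ∀ a : A, π i j (e k * a * e l) = 0 := by
    intro i j k l hne a
    have hcase : k ≠ i ∨ l ≠ j := by
      by_contra h
      push_neg at h
      exact hne (by rw [h.1, h.2])
    rcases hcase with hk | hl
    · have h1 : e i * (e k * a * e l) = 0 := by
        rw [(hnuc k).1 a (e l), ← (hnuc k).2.1 (e i) (a * e l), horth i k (Ne.symm hk),
          zero_mul]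
      rw [hπ, h1, zero_mul]
    · have h1 : e i * (e k * a * e l) * e j = 0 := by
        rw [← (hnuc l).2.2 (e i) (e k * a), (hnuc l).2.1 (e i * (e k * a)) (e j),
          horth l j hl, mul_zero]
      rw [hπ, h1]
  -- S i j ≤ fixed points of π i j
  have hfix : ∀ i j, ∀ x ∈ S i j, π i j x = x := by
    intro i j x hx
    have hle : S i j ≤ LinearMap.ker (π i j - LinearMap.id) := by
      rw [hSdef]
      apply Submodule.span_le.mpr
      rintro _ ⟨a, rfl⟩
      simp [LinearMap.mem_ker, factA i j a]
    have := hle hx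
    simpa [LinearMap.mem_ker, sub_eq_zero] using this
  -- S k l ≤ ker of π i j for (k,l) ≠ (i,j)
  have hkill : ∀ i j k l, (k, l) ≠ (i, j) → ∀ x ∈ S k l, π i j x = 0 := by
    intro i j k l hne x hx
    have hle : S k l ≤ LinearMap.ker (π i j) := by
      rw [hSdef]
      apply Submodule.span_le.mpr
      rintro _ ⟨a, rfl⟩
      exact factB i j k l hne a
    exact hle hx
  -- the product projection map is surjective
  let Φ : A →ₗ[F] (∀ p : Fin n × Fin n, S p.1 p.2) :=
    LinearMap.pi (fun p => (π p.1 p.2).codRestrict (S p.1 p.2) (fun a => mem_S p.1 p.2 a))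
  have hΦsurj : Function.Surjective Φ := by
    intro x
    refine ⟨∑ q : Fin n × Fin n, (x q : A), ?_⟩
    funext p
    ext
    show π p.1 p.2 (∑ q : Fin n × Fin n, (x q : A)) = (x p : A)
    rw [map_sum]
    rw [Finset.sum_eq_single p]
    · exact hfix p.1 p.2 _ (x p).2
    · intro q _ hq
      exact hkill p.1 p.2 q.1 q.2 (by simpa using hq) _ (x q).2
    · intro h
      exact absurd (Finset.mem_univ p) h
  -- dimension count
  have hprod : Module.finrank F (∀ p : Fin n × Fin n, S p.1 p.2) =
      ∑ p : Fin n × Fin n, Module.finrank F (S p.1 p.2) :=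
    Module.finrank_pi_fintype F
  have hle : ∑ p : Fin n × Fin n, Module.finrank F (S p.1 p.2) ≤ n ^ 2 := by
    rw [← hprod, ← hdim]
    calc Module.finrank F (∀ p : Fin n × Fin n, S p.1 p.2)
        = Module.finrank F (LinearMap.range Φ) := by
          rw [LinearMap.range_eq_top.mpr hΦsurj, finrank_top]
      _ ≤ Module.finrank F A := LinearMap.finrank_range_le Φ
  have hpos : ∀ p : Fin n × Fin n, 1 ≤ Module.finrank F (S p.1 p.2) := by
    intro p
    obtain ⟨a, ha⟩ := hfaithful p.1 p.2
    have : Nontrivial (S p.1 p.2) :=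
      ⟨⟨⟨_, mem_S p.1 p.2 a⟩, 0, by simpa [Subtype.ext_iff] using ha⟩⟩
    exact Module.finrank_pos
  have hone : ∀ p : Fin n × Fin n, Module.finrank F (S p.1 p.2) = 1 := by
    intro p
    by_contra hp
    have h2 : 2 ≤ Module.finrank F (S p.1 p.2) := by
      have := hpos p
      omega
    have : (Finset.univ : Finset (Fin n × Fin n)).card < ∑ q : Fin n × Fin n, Module.finrank F (S q.1 q.2) := by
      calc (Finset.univ : Finset (Fin n × Fin n)).card = ∑ _q : Fin n × Fin n, 1 := by simp
        _ < ∑ q : Fin n × Fin n, Module.finrank F (S q.1 q.2) :=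
          Finset.sum_lt_sum (fun q _ => hpos q) ⟨p, Finset.mem_univ p, h2⟩
    rw [Finset.card_univ, Fintype.card_prod, Fintype.card_fin, ← sq] at this
    omega
  have hone' : ∀ i j, Module.finrank F (S i j) = 1 := fun i j => hone (i, j)
  refine ⟨?_, ?_⟩
  · intro i j
    exact hone' i j
  -- primitivity
  rintro i ⟨f, g, hfnuc, hgnuc, hf0, hg0, hff, hgg, hfg, hgf, hefg⟩
  -- e i ≠ 0
  have hei0 : e i ≠ 0 := by
    obtain ⟨a, ha⟩ := hfaithful i i
    intro h
    apply ha
    rw [h, zero_mul, zero_mul]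
  -- f ∈ S i i
  have hfmem : f ∈ S i i := by
    have h1 : e i * f = f := by rw [hefg, add_mul, hff, hgf, add_zero]
    have h2 : f * e i = f := by rw [hefg, mul_add, hff, hfg, add_zero]
    have : f = e i * f * e i := by rw [h1, h2]
    exact this ▸ mem_S i i f
  have heimem : e i ∈ S i i := by
    have : e i = e i * e i * e i := by rw [hidem i, hidem i]
    exact this ▸ mem_S i i (e i)
  -- S i i = span {e i}
  have hspan : Submodule.span F {e i} = S i i := by
    have hle1 : Submodule.span F {e i} ≤ S i i :=
      Submodule.span_le.mpr (Set.singleton_subset_iff.mpr heimem)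
    have hnb : Submodule.span F {e i} ≠ ⊥ := by
      simpa [Submodule.span_singleton_eq_bot] using hei0
    have hnt : Nontrivial (Submodule.span F ({e i} : Set A)) :=
      Submodule.nontrivial_iff_ne_bot.mpr hnb
    have hrk : Module.finrank F (S i i) ≤ Module.finrank F (Submodule.span F ({e i} : Set A)) := by
      rw [hone' i i]
      exact Module.finrank_pos
    exact Submodule.eq_of_le_of_finrank_le hle1 hrk
  -- so f = c • e i
  have hmem' : f ∈ Submodule.span F {e i} := hspan.symm ▸ hfmem
  obtain ⟨c, hc⟩ := Submodule.mem_span_singleton.mp hmem'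
  -- idempotency forces c = 0 or 1
  have h1 : f * f = (c * c) • e i := by
    rw [← hc, smul_mul_assoc, mul_smul_comm, smul_smul, hidem i]
  have h2 : (c * c) • e i = c • e i := by rw [← h1, hff, ← hc]
  have hc2 : (c * c - c) • e i = 0 := by rw [sub_smul, h2, sub_self]
  rcases smul_eq_zero.mp hc2 with hcc | hzero
  · have : c * (c - 1) = 0 := by ring_nf; linear_combination hcc
    rcases mul_eq_zero.mp this with h0 | h1'
    · exact hf0 (by rw [← hc, h0, zero_smul])
    · have hc1 : c = 1 := sub_eq_zero.mp h1'
      have hfe : f = e i := by rw [← hc, hc1, one_smul]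
      have : g = 0 := by
        have := hefg
        rw [hfe] at this
        exact (left_eq_add.mp this)
      exact hg0 this
  · exact hei0 hzero
end

section
/- Let A be a nonassociative F-algebra that is quasi-associative with respect to a simple subalgebra B of its nucleus with separable center L. Then the centralizer of L in A equals B, and the centralizer of B in A equals L. -/
open scoped TensorProduct

/-- If `A` is quasi-associative with respect to a simple subalgebra `B` of its nucleus
with separable center `L` (the map `B ⊗ B^op → End_{L⊗L}(A)` is an isomorphism), then
the centralizer of `L` in `A` is `B`, and the centralizer of `B` in `A` is `L`. -/
theorem stmt_5 {F A B : Type*} [Field F]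
    [NonAssocRing A] [Module F A] [SMulCommClass F A A] [IsScalarTower F A A]
    [FiniteDimensional F A]
    [Ring B] [Algebra F B] [FiniteDimensional F B] [IsSimpleRing B]
    [Algebra.IsSeparable F (Subalgebra.center F B)]
    (j : B →ₗ[F] A) (hj_inj : Function.Injective j)
    (hj_mul : ∀ b b' : B, j (b * b') = j b * j b') (hj_one : j 1 = 1)
    (hj_nuc : ∀ b : B, j b ∈ nucleus A)
    (hinj : ∀ x : B ⊗[F] B, (∀ a : A, biAct j x a = 0) → x = 0)
    (hsurj : ∀ f : A →ₗ[F] A,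
      (∀ b ∈ Subalgebra.center F B, ∀ a : A, f (j b * a) = j b * f a ∧
        f (a * j b) = f a * j b) →
      ∃ x : B ⊗[F] B, ∀ a : A, biAct j x a = f a) :
    ({a : A | ∀ b : B, b ∈ Subalgebra.center F B → a * j b = j b * a} = Set.range j) ∧
    ({a : A | ∀ b : B, a * j b = j b * a} =
      {x : A | ∃ b ∈ Subalgebra.center F B, x = j b}) := by
  -- range of j commutes with j of central elements
  have hcomm : ∀ b : B, ∀ b' ∈ Subalgebra.center F B, j b * j b' = j b' * j b := by
    intro b b' hb'
    rw [← hj_mul, ← hj_mul, (Subalgebra.mem_center_iff.mp hb') b]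
  -- biAct of anything applied to 1 lands in the range of j
  have hone : ∀ t : B ⊗[F] B, biAct j t 1 ∈ Set.range j := by
    intro t
    induction t using TensorProduct.induction_on with
    | zero => exact ⟨0, by simp⟩
    | tmul b b' =>
      refine ⟨b * b', ?_⟩
      simp [biAct, hj_mul, TensorProduct.lift.tmul]
    | add x y hx hy =>
      obtain ⟨bx, hbx⟩ := hx
      obtain ⟨by', hby⟩ := hy
      exact ⟨bx + by', by simp [hbx, hby]⟩
  -- key: anything commuting with j of central elements is in the range of j
  have key : ∀ a : A, (∀ b : B, b ∈ Subalgebra.center F B → a * j b = j b * a) →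
      a ∈ Set.range j := by
    intro a ha
    have hcond : ∀ b ∈ Subalgebra.center F B, ∀ x : A,
        LinearMap.mulRight F a (j b * x) = j b * LinearMap.mulRight F a x ∧
        LinearMap.mulRight F a (x * j b) = LinearMap.mulRight F a x * j b := by
      intro b hb x
      refine ⟨?_, ?_⟩
      · simp only [LinearMap.mulRight_apply]
        exact (hj_nuc b).1 x a
      · simp only [LinearMap.mulRight_apply]
        rw [(hj_nuc b).2.1 x a, (hj_nuc b).2.2 x a, ha b hb]
    obtain ⟨t, ht⟩ := hsurj (LinearMap.mulRight F a) hcond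
    have h1 := ht 1
    rw [LinearMap.mulRight_apply, one_mul] at h1
    exact h1 ▸ hone t
  constructor
  · apply Set.eq_of_subset_of_subset
    · intro a ha
      exact key a ha
    · rintro _ ⟨b, rfl⟩ b' hb'
      exact hcomm b b' hb'
  · apply Set.eq_of_subset_of_subset
    · intro a ha
      obtain ⟨b₀, rfl⟩ := key a (fun b hb => ha b)
      refine ⟨b₀, Subalgebra.mem_center_iff.mpr fun g => ?_, rfl⟩
      apply hj_inj
      rw [hj_mul, hj_mul, ha g]
    · rintro _ ⟨b, hb, rfl⟩ b'
      exact (hcomm b' b hb).symm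
end

section
/- For any reduced skew set c of degree n over a field F, the diagonal subalgebra Δ = span{e_11,…,e_nn} of the skew matrix algebra M_n(F;c) is contained in the nucleus of M_n(F;c). -/
open scoped BigOperators TensorProduct

/-- The skew matrix multiplication determined by a skew set `c`:
`(x * y) i l = ∑ j, c i j l * x i j * y j l`. -/
def skewMul {F : Type*} [Field F] {n : ℕ} (c : Fin n → Fin n → Fin n → F)
    (x y : Fin n → Fin n → F) : Fin n → Fin n → F :=
  fun i l => ∑ j, c i j l * x i j * y j l

/-- The matrix unit `e_{ij}`. -/
def stdE (F : Type*) [Field F] {n : ℕ} (i j : Fin n) : Fin n → Fin n → F :=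
  fun a b => if a = i ∧ b = j then 1 else 0

/-- The identity element `1 = e_11 + ⋯ + e_nn`. -/
def skewOne (F : Type*) [Field F] (n : ℕ) : Fin n → Fin n → F :=
  fun a b => if a = b then 1 else 0

/-- A skew set is reduced if `c_{iij} = c_{ijj} = 1`. -/
def IsReduced' {F : Type*} [Field F] {n : ℕ} (c : Fin n → Fin n → Fin n → F) : Prop :=
  ∀ i j : Fin n, c i i j = 1 ∧ c i j j = 1

/-- The left nucleus of the skew matrix algebra. -/
def lNuc {F : Type*} [Field F] {n : ℕ} (c : Fin n → Fin n → Fin n → F) :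
    Set (Fin n → Fin n → F) :=
  {x | ∀ y z, skewMul c (skewMul c x y) z = skewMul c x (skewMul c y z)}

/-- The middle nucleus of the skew matrix algebra. -/
def mNuc {F : Type*} [Field F] {n : ℕ} (c : Fin n → Fin n → Fin n → F) :
    Set (Fin n → Fin n → F) :=
  {x | ∀ y z, skewMul c (skewMul c y x) z = skewMul c y (skewMul c x z)}

/-- The right nucleus of the skew matrix algebra. -/
def rNuc {F : Type*} [Field F] {n : ℕ} (c : Fin n → Fin n → Fin n → F) :
    Set (Fin n → Fin n → F) :=
  {x | ∀ y z, skewMul c (skewMul c y z) x = skewMul c y (skewMul c z x)}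

/-- The nucleus of the skew matrix algebra. -/
def skewNuc {F : Type*} [Field F] {n : ℕ} (c : Fin n → Fin n → Fin n → F) :
    Set (Fin n → Fin n → F) :=
  lNuc c ∩ mNuc c ∩ rNuc c

/-- For any reduced skew set `c`, the diagonal subalgebra
`Δ = span{e_11, …, e_nn}` is contained in the nucleus of `M_n(F;c)`. -/
theorem stmt_8 {F : Type*} [Field F] {n : ℕ} (c : Fin n → Fin n → Fin n → F)
    (hc : IsReduced' c) :
    (Submodule.span F {x : Fin n → Fin n → F | ∃ i, x = stdE F i i} : Set (Fin n → Fin n → F))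
      ⊆ skewNuc c := by
  -- the submodule of diagonal matrices
  set D : Submodule F (Fin n → Fin n → F) :=
    { carrier := {x | ∀ i j : Fin n, i ≠ j → x i j = 0}
      add_mem' := by intro a b ha hb i j h; simp [ha i j h, hb i j h]
      zero_mem' := by intro i j h; rfl
      smul_mem' := by intro r a ha i j h; simp [ha i j h] } with hD
  have hspan : Submodule.span F {x : Fin n → Fin n → F | ∃ i, x = stdE F i i} ≤ D := by
    rw [Submodule.span_le]
    rintro x ⟨i, rfl⟩ a b h
    simp only [hD, stdE]
    rw [if_neg]
    rintro ⟨ha, hb⟩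
    exact h (ha.trans hb.symm)
  intro x hx
  have hxD : ∀ i j : Fin n, i ≠ j → x i j = 0 := hspan hx
  -- key simplifications for diagonal x
  have hxl : ∀ y : Fin n → Fin n → F, skewMul c x y = fun i l => x i i * y i l := by
    intro y; funext i l
    rw [skewMul, Finset.sum_eq_single i]
    · rw [(hc i l).1]; ring
    · intro j _ hj; rw [hxD i j (Ne.symm hj)]; ring
    · intro h; exact absurd (Finset.mem_univ i) h
  have hxr : ∀ y : Fin n → Fin n → F, skewMul c y x = fun i l => y i l * x l l := by
    intro y; funext i l
    rw [skewMul, Finset.sum_eq_single l]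
    · rw [(hc i l).2]; ring
    · intro j _ hj; rw [hxD j l hj]; ring
    · intro h; exact absurd (Finset.mem_univ l) h
  refine ⟨⟨?_, ?_⟩, ?_⟩
  · intro y z
    rw [hxl, hxl]
    funext i l
    simp only [skewMul, Finset.mul_sum]
    exact Finset.sum_congr rfl fun j _ => by ring
  · intro y z
    rw [hxr, hxl]
    funext i l
    simp only [skewMul]
    exact Finset.sum_congr rfl fun j _ => by ring
  · intro y z
    rw [hxr, hxr]
    funext i l
    simp only [skewMul, Finset.sum_mul]
    exact Finset.sum_congr rfl fun j _ => by ring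
end

section
/- The center of any skew matrix algebra M_n(F;c) (with reduced skew set c) consists exactly of the scalar multiples of the identity 1 = e_11 + ⋯ + e_nn. -/
open scoped BigOperators TensorProduct

/-- Multiplying a scalar multiple of the identity on the left acts as scalar multiplication. -/
lemma smulOne_skewMul {F : Type*} [Field F] {n : ℕ} (c : Fin n → Fin n → Fin n → F)
    (hc : IsReduced' c) (α : F) (y : Fin n → Fin n → F) :
    skewMul c (α • skewOne F n) y = α • y := by
  funext i l
  simp only [skewMul, skewOne, Pi.smul_apply, smul_eq_mul, mul_ite, mul_one, mul_zero,
    ite_mul, zero_mul]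
  rw [Finset.sum_eq_single i]
  · simp [(hc i l).1, mul_comm]
  · intro b _ hb
    simp [Ne.symm hb]
  · simp

/-- Multiplying a scalar multiple of the identity on the right acts as scalar multiplication. -/
lemma skewMul_smulOne {F : Type*} [Field F] {n : ℕ} (c : Fin n → Fin n → Fin n → F)
    (hc : IsReduced' c) (α : F) (y : Fin n → Fin n → F) :
    skewMul c y (α • skewOne F n) = α • y := by
  funext i l
  simp only [skewMul, skewOne, Pi.smul_apply, smul_eq_mul, mul_ite, mul_one, mul_zero,
    ite_mul, zero_mul]
  rw [Finset.sum_eq_single l]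
  · simp [(hc i l).2, mul_comm]
  · intro b _ hb
    simp [hb]
  · simp

/-- `skewMul` is homogeneous in the left factor. -/
lemma skewMul_smul_left {F : Type*} [Field F] {n : ℕ} (c : Fin n → Fin n → Fin n → F)
    (α : F) (y z : Fin n → Fin n → F) :
    skewMul c (α • y) z = α • skewMul c y z := by
  funext i l
  simp only [skewMul, Pi.smul_apply, smul_eq_mul, Finset.mul_sum]
  exact Finset.sum_congr rfl fun j _ => by ring

/-- `skewMul` is homogeneous in the right factor. -/
lemma skewMul_smul_right {F : Type*} [Field F] {n : ℕ} (c : Fin n → Fin n → Fin n → F)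
    (α : F) (y z : Fin n → Fin n → F) :
    skewMul c y (α • z) = α • skewMul c y z := by
  funext i l
  simp only [skewMul, Pi.smul_apply, smul_eq_mul, Finset.mul_sum]
  exact Finset.sum_congr rfl fun j _ => by ring

/-- Evaluation of `x * e_{kl}` at `(i, l)`. -/
lemma skewMul_stdE_apply {F : Type*} [Field F] {n : ℕ} (c : Fin n → Fin n → Fin n → F)
    (x : Fin n → Fin n → F) (i k l : Fin n) :
    skewMul c x (stdE F k l) i l = c i k l * x i k := by
  simp only [skewMul, stdE, and_true, mul_ite, mul_one, mul_zero]
  rw [Finset.sum_ite_eq' Finset.univ k (fun j => c i j l * x i j)]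
  simp

/-- Evaluation of `e_{kl} * x` at `(i, l)`. -/
lemma stdE_skewMul_apply {F : Type*} [Field F] {n : ℕ} (c : Fin n → Fin n → Fin n → F)
    (x : Fin n → Fin n → F) (i k l : Fin n) :
    skewMul c (stdE F k l) x i l = if i = k then c i l l * x l l else 0 := by
  simp only [skewMul, stdE, ite_and, ite_mul, one_mul, zero_mul, mul_ite, mul_zero]
  by_cases hik : i = k
  · subst hik
    simp only [if_pos rfl, if_true, mul_one]
    rw [Finset.sum_ite_eq' Finset.univ l (fun j => c i j l * x j l)]
    simp
  · simp [hik]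

/-- The center of a skew matrix algebra `M_n(F;c)` (with `c` reduced) consists exactly of
the scalar multiples of the identity. -/
theorem stmt_9 {F : Type*} [Field F] {n : ℕ} (c : Fin n → Fin n → Fin n → F)
    (hc : IsReduced' c) :
    {x : Fin n → Fin n → F | x ∈ skewNuc c ∧ ∀ y, skewMul c x y = skewMul c y x}
      = {x : Fin n → Fin n → F | ∃ α : F, x = α • skewOne F n} := by
  ext x
  simp only [Set.mem_setOf_eq]
  constructor
  · rintro ⟨-, hcomm⟩
    cases n with
    | zero => exact ⟨0, funext fun i => i.elim0⟩
    | succ m =>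
      refine ⟨x 0 0, ?_⟩
      have key : ∀ i k l : Fin (m + 1),
          c i k l * x i k = if i = k then c i l l * x l l else 0 := by
        intro i k l
        have h := congrFun (congrFun (hcomm (stdE F k l)) i) l
        rwa [skewMul_stdE_apply, stdE_skewMul_apply] at h
      funext i k
      simp only [skewOne, Pi.smul_apply, smul_eq_mul, mul_ite, mul_one, mul_zero]
      by_cases hik : i = k
      · subst hik
        have h := key i i 0
        simpa [(hc i 0).1, (hc i 0).2] using h
      · have h := key i k k
        simp only [(hc i k).2, one_mul, if_neg hik] at h
        simp [h, hik]
  · rintro ⟨α, rfl⟩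
    refine ⟨⟨⟨?_, ?_⟩, ?_⟩, ?_⟩
    · intro y z
      rw [smulOne_skewMul c hc, smulOne_skewMul c hc, skewMul_smul_left]
    · intro y z
      rw [skewMul_smulOne c hc, smulOne_skewMul c hc, skewMul_smul_left,
        skewMul_smul_right]
    · intro y z
      rw [skewMul_smulOne c hc, skewMul_smulOne c hc, skewMul_smul_right]
    · intro y
      rw [smulOne_skewMul c hc, skewMul_smulOne c hc]
end

section
/- If M_n(F;c) is associative and all entries c_{ijk} are nonzero, then c is equivalent to the trivial skew set, i.e. there exist nonzero scalars γ_{ij} with γ_{ii} = 1 such that c_{jkl} = γ_{jk}γ_{kl}γ_{jl}^{-1} for all j,k,l; consequently M_n(F;c) ≅ M_n(F). -/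
open scoped BigOperators TensorProduct

/-!
Associativity evaluated on matrix units, `((e_ij e_jk) e_kl)_il = (e_ij (e_jk e_kl))_il`, is the
cocycle identity `c_ijk c_ikl = c_jkl c_ijl`. When `c` takes no zero values, fixing the first
index at some `i₀` solves it as a coboundary, `c_jkl = γ_jk γ_kl γ_jl⁻¹` with `γ_jk = c_{i₀jk}`,
and rescaling each entry `x_ij` by `γ_ij` carries the product of `c` onto the ordinary one.
-/

section SkewMatrix

variable {F : Type*} [Field F] {n : ℕ}

theorem stdE_apply_self (i j : Fin n) : stdE F i j i j = 1 := by
  simp [stdE]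

theorem skewMul_stdE_left_apply (c : Fin n → Fin n → Fin n → F) (i j l : Fin n)
    (y : Fin n → Fin n → F) : skewMul c (stdE F i j) y i l = c i j l * y j l := by
  simp [skewMul, stdE]

theorem skewMul_stdE_right_apply (c : Fin n → Fin n → Fin n → F) (i k l : Fin n)
    (x : Fin n → Fin n → F) : skewMul c x (stdE F k l) i l = c i k l * x i k := by
  simp [skewMul, stdE]

theorem cocycle_of_assoc (c : Fin n → Fin n → Fin n → F)
    (hassoc : ∀ x y z : Fin n → Fin n → F,
      skewMul c (skewMul c x y) z = skewMul c x (skewMul c y z))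
    (i j k l : Fin n) : c i j k * c i k l = c j k l * c i j l := by
  have h := congrFun (congrFun (hassoc (stdE F i j) (stdE F j k) (stdE F k l)) i) l
  simp only [skewMul_stdE_right_apply, skewMul_stdE_left_apply, stdE_apply_self] at h
  linear_combination h

def skewRescale (γ : Fin n → Fin n → Fˣ) : (Fin n → Fin n → F) ≃ₗ[F] (Fin n → Fin n → F) :=
  LinearEquiv.piCongrRight fun i => LinearEquiv.piCongrRight fun j =>
    LinearEquiv.smulOfUnit (γ i j)

theorem skewRescale_apply (γ : Fin n → Fin n → Fˣ) (x : Fin n → Fin n → F) (i j : Fin n) :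
    skewRescale γ x i j = γ i j * x i j :=
  rfl

theorem skewRescale_skewMul {c c' : Fin n → Fin n → Fin n → F} {γ : Fin n → Fin n → Fˣ}
    (h : ∀ j k l, c j k l = γ j k * γ k l * (γ j l : F)⁻¹ * c' j k l)
    (x y : Fin n → Fin n → F) :
    skewRescale γ (skewMul c x y) = skewMul c' (skewRescale γ x) (skewRescale γ y) := by
  funext i l
  simp only [skewRescale_apply, skewMul, Finset.mul_sum]
  refine Finset.sum_congr rfl fun j _ => ?_
  rw [h i j l]
  field_simp

end SkewMatrix

theorem eq_mul_mul_inv_of_cocycle {F ι : Type*} [Field F] {c : ι → ι → ι → F}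
    (hcoc : ∀ i j k l, c i j k * c i k l = c j k l * c i j l) {i₀ j l : ι}
    (hne : c i₀ j l ≠ 0) (k : ι) : c j k l = c i₀ j k * c i₀ k l * (c i₀ j l)⁻¹ := by
  rw [eq_mul_inv_iff_mul_eq₀ hne]
  exact (hcoc i₀ j k l).symm

/-- If `M_n(F;c)` is associative and all entries `c_{ijk}` are nonzero, then `c` is
equivalent to the trivial skew set, and consequently `M_n(F;c) ≅ M_n(F)`. -/
theorem stmt_12 {F : Type*} [Field F] {n : ℕ} (c : Fin n → Fin n → Fin n → F)
    (hc : IsReduced' c)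
    (hassoc : ∀ x y z : Fin n → Fin n → F,
      skewMul c (skewMul c x y) z = skewMul c x (skewMul c y z))
    (hnz : ∀ i j k : Fin n, c i j k ≠ 0) :
    (∃ γ : Fin n → Fin n → F, (∀ i j, γ i j ≠ 0) ∧ (∀ i, γ i i = 1) ∧
      ∀ j k l : Fin n, c j k l = γ j k * γ k l * (γ j l)⁻¹) ∧
    ∃ φ : (Fin n → Fin n → F) ≃ₗ[F] (Fin n → Fin n → F),
      ∀ x y, φ (skewMul c x y) = skewMul (fun _ _ _ => (1 : F)) (φ x) (φ y) := by
  rcases isEmpty_or_nonempty (Fin n) with hempty | ⟨⟨i₀⟩⟩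
  · exact ⟨⟨fun _ _ => 1, isEmptyElim, isEmptyElim, isEmptyElim⟩, LinearEquiv.refl F _,
      fun _ _ => Subsingleton.elim _ _⟩
  let γ : Fin n → Fin n → Fˣ := fun i j => Units.mk0 (c i₀ i j) (hnz i₀ i j)
  have hcob : ∀ j k l, c j k l = γ j k * γ k l * (γ j l : F)⁻¹ := fun j k l =>
    eq_mul_mul_inv_of_cocycle (cocycle_of_assoc c hassoc) (hnz i₀ j l) k
  refine ⟨⟨fun i j => γ i j, fun i j => (γ i j).ne_zero, fun i => (hc i₀ i).2, hcob⟩,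
    skewRescale γ, skewRescale_skewMul fun j k l => ?_⟩
  rw [hcob, mul_one]
end

section
/- A skew matrix algebra M_2(F;c) of degree 2 is associative if and only if c_{121} = c_{212}. -/
open scoped BigOperators TensorProduct

/-- A skew matrix algebra `M_2(F;c)` of degree 2 is associative
if and only if `c_{121} = c_{212}`. -/
theorem stmt_13 {F : Type*} [Field F] (c : Fin 2 → Fin 2 → Fin 2 → F)
    (hc : IsReduced' c) :
    (∀ x y z : Fin 2 → Fin 2 → F, skewMul c (skewMul c x y) z = skewMul c x (skewMul c y z))
      ↔ c 0 1 0 = c 1 0 1 := by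
  have h00 : c 0 0 0 = 1 := (hc 0 0).1
  have h01 : c 0 0 1 = 1 := (hc 0 1).1
  have h10 : c 1 1 0 = 1 := (hc 1 0).1
  have h11 : c 1 1 1 = 1 := (hc 1 1).1
  have g00 : c 0 0 0 = 1 := (hc 0 0).2
  have g01 : c 0 1 1 = 1 := (hc 0 1).2
  have g10 : c 1 0 0 = 1 := (hc 1 0).2
  have g11 : c 1 1 1 = 1 := (hc 1 1).2
  constructor
  · intro H
    have h := congrFun (congrFun (H (stdE F 0 1) (stdE F 1 0) (stdE F 0 1)) 0) 1
    simp [skewMul, stdE, Fin.sum_univ_two, h00, h01, h10, h11, g01, g10] at h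
    exact h
  · intro h x y z
    funext i l
    simp only [skewMul, Fin.sum_univ_two]
    fin_cases i <;> fin_cases l <;>
      simp only [Fin.mk_zero, Fin.mk_one, h00, h01, h10, h11, g01, g10, h] <;> ring
end

section
/- Let S be a separated semigroup with zero, meaning for all s', s'' ∈ S the set s'Ss'' contains at most one nonzero element. Then every two-sided ideal of a unital S-graded (possibly nonassociative) algebra is homogeneous, i.e. generated by its homogeneous elements. -/
/-- Let `S` be a separated semigroup with zero (each set `s'Ss''` contains at most one
nonzero element). Then every two-sided ideal of a unital `S`-graded (possibly
nonassociative) algebra is homogeneous. -/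
theorem stmt_14 {S : Type*} [SemigroupWithZero S] [DecidableEq S]
    (hsep : ∀ s' s'' a b : S, (∃ t, a = s' * t * s'') → (∃ t, b = s' * t * s'') →
      a ≠ 0 → b ≠ 0 → a = b)
    {F A : Type*} [Field F] [NonAssocRing A] [Module F A]
    (𝒜 : S → Submodule F A) [DirectSum.Decomposition 𝒜]
    (hgmul : ∀ (s s' : S), ∀ x ∈ 𝒜 s, ∀ y ∈ 𝒜 s', x * y ∈ 𝒜 (s * s'))
    (hzero : 𝒜 0 = ⊥)
    (I : Submodule F A)
    (hI : ∀ a x : A, x ∈ I → a * x ∈ I ∧ x * a ∈ I) :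
    ∀ x ∈ I, ∀ s : S, (DirectSum.decompose 𝒜 x s : A) ∈ I := by
  classical
  intro x hx s
  set u : S → A := fun t => (DirectSum.decompose 𝒜 (1 : A) t : A) with hu
  have humem : ∀ t, u t ∈ 𝒜 t := fun t => SetLike.coe_mem _
  -- each sandwich u s' * (x * u s'') is homogeneous
  have hom : ∀ s' s'' : S, ∃ m, u s' * (x * u s'') ∈ 𝒜 m := by
    intro s' s''
    have hb : u s' * (x * u s'') =
        ∑ t ∈ (DirectSum.decompose 𝒜 x).support,
          u s' * ((DirectSum.decompose 𝒜 x t : A) * u s'') := by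
      conv_lhs => rw [← DirectSum.sum_support_decompose 𝒜 x]
      rw [Finset.sum_mul, Finset.mul_sum]
    have hterm : ∀ t, u s' * ((DirectSum.decompose 𝒜 x t : A) * u s'') ∈ 𝒜 (s' * t * s'') := by
      intro t
      have h1 := hgmul t s'' _ (SetLike.coe_mem (DirectSum.decompose 𝒜 x t)) _ (humem s'')
      have h2 := hgmul s' (t * s'') _ (humem s') _ h1
      rwa [← mul_assoc] at h2
    by_cases hT : ∃ t ∈ (DirectSum.decompose 𝒜 x).support, s' * t * s'' ≠ 0
    · obtain ⟨t₀, _, ht₀⟩ := hT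
      refine ⟨s' * t₀ * s'', ?_⟩
      rw [hb]
      refine Submodule.sum_mem _ (fun t _ => ?_)
      by_cases h0 : s' * t * s'' = 0
      · have : u s' * ((DirectSum.decompose 𝒜 x t : A) * u s'') ∈ (⊥ : Submodule F A) := by
          rw [← hzero, ← h0]; exact hterm t
        rw [Submodule.mem_bot] at this
        rw [this]; exact zero_mem _
      · have := hsep s' s'' _ _ ⟨t, rfl⟩ ⟨t₀, rfl⟩ h0 ht₀
        rw [← this]; exact hterm t
    · push_neg at hT
      refine ⟨0, ?_⟩
      rw [hb]
      refine Submodule.sum_mem _ (fun t ht => ?_)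
      rw [← hT t ht]; exact hterm t
  -- each sandwich is in I
  have memI : ∀ s' s'' : S, u s' * (x * u s'') ∈ I := by
    intro s' s''
    exact (hI (u s') _ ((hI (u s'') x hx).2)).1
  -- x is the sum of the sandwiches
  have hsum : x = ∑ s' ∈ (DirectSum.decompose 𝒜 (1 : A)).support,
      ∑ s'' ∈ (DirectSum.decompose 𝒜 (1 : A)).support, u s' * (x * u s'') := by
    conv_lhs => rw [← mul_one x, ← one_mul (x * 1),
      ← DirectSum.sum_support_decompose 𝒜 (1 : A)]
    rw [Finset.sum_mul]
    refine Finset.sum_congr rfl (fun s' _ => ?_)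
    rw [Finset.mul_sum, Finset.mul_sum]
  -- conclude componentwise
  set L : A →ₗ[F] A :=
    (𝒜 s).subtype ∘ₗ (DirectSum.component F S (fun i => 𝒜 i) s) ∘ₗ
      (DirectSum.decomposeLinearEquiv 𝒜).toLinearMap with hL
  have hLapp : ∀ y : A, L y = (DirectSum.decompose 𝒜 y s : A) := fun y => rfl
  rw [← hLapp, hsum, map_sum]
  refine Submodule.sum_mem _ (fun s' _ => ?_)
  rw [map_sum]
  refine Submodule.sum_mem _ (fun s'' _ => ?_)
  rw [hLapp]
  obtain ⟨m, hm⟩ := hom s' s''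
  by_cases hms : m = s
  · rw [DirectSum.decompose_of_mem_same 𝒜 (hms ▸ hm)]
    exact memI s' s''
  · rw [DirectSum.decompose_of_mem_ne 𝒜 hm hms]
    exact zero_mem _
end

section
/- If c is a reduced skew set of degree n with c_{iji} ≠ 0 for all i, j, then the skew matrix algebra M_n(F;c) is simple. -/
open scoped BigOperators TensorProduct

lemma skewMul_stdE {F : Type*} [Field F] {n : ℕ} (c : Fin n → Fin n → Fin n → F)
    (i j k l : Fin n) :
    skewMul c (stdE F i j) (stdE F k l) =
      fun a b => if j = k ∧ a = i ∧ b = l then c i j l else 0 := by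
  funext a b
  simp only [skewMul, stdE]
  rw [Finset.sum_eq_single j]
  · by_cases h1 : a = i <;> by_cases h2 : j = k <;> by_cases h3 : b = l <;> simp_all
  · intro b' _ hb'; simp [hb']
  · simp

lemma sandwich {F : Type*} [Field F] {n : ℕ} (c : Fin n → Fin n → Fin n → F)
    (hc : ∀ i j : Fin n, c i i j = 1 ∧ c i j j = 1)
    (x : Fin n → Fin n → F) (i j : Fin n) :
    skewMul c (stdE F i i) (skewMul c x (stdE F j j)) = (x i j) • stdE F i j := by
  funext a b
  simp only [skewMul, stdE, Pi.smul_apply, smul_eq_mul]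
  rw [Finset.sum_eq_single i]
  · have h1 := (hc i b).1
    by_cases ha : a = i
    · subst ha
      simp only [and_self, if_pos rfl, h1, *]
      rw [Finset.sum_eq_single j]
      · have := (hc a j).2
        by_cases hb : b = j <;> simp_all
      · intro b' _ hb'; simp [hb']
      · simp
    · simp [ha]
  · intro b' _ hb'; simp [hb']
  · simp

/-- If `c` is a reduced skew set with `c_{iji} ≠ 0` for all `i, j`,
then the skew matrix algebra `M_n(F;c)` is simple. -/
theorem stmt_15 {F : Type*} [Field F] {n : ℕ} (c : Fin n → Fin n → Fin n → F)
    (hc : IsReduced' c) (hreg : ∀ i j : Fin n, c i j i ≠ 0)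
    (I : Submodule F (Fin n → Fin n → F))
    (hI : ∀ (a x : Fin n → Fin n → F), x ∈ I → skewMul c a x ∈ I ∧ skewMul c x a ∈ I) :
    I = ⊥ ∨ I = ⊤ := by
  by_cases hbot : I = ⊥
  · exact Or.inl hbot
  right
  -- get a nonzero element of I
  obtain ⟨x, hxI, hx0⟩ : ∃ x ∈ I, x ≠ 0 := by
    by_contra h
    push_neg at h
    exact hbot (le_bot_iff.mp fun y hy => h y hy)
  obtain ⟨i, j, hxij⟩ : ∃ i j, x i j ≠ 0 := by
    by_contra h
    push_neg at h
    exact hx0 (funext fun a => funext fun b => h a b)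
  -- stdE F i j ∈ I
  have hEij : stdE F i j ∈ I := by
    have h1 : skewMul c (stdE F i i) (skewMul c x (stdE F j j)) ∈ I :=
      (hI (stdE F i i) _ (hI (stdE F j j) x hxI).2).1
    rw [sandwich c hc x i j] at h1
    have := I.smul_mem (x i j)⁻¹ h1
    rwa [smul_smul, inv_mul_cancel₀ hxij, one_smul] at this
  -- stdE F i i ∈ I
  have hEii : stdE F i i ∈ I := by
    have h1 : skewMul c (stdE F i j) (stdE F j i) ∈ I := (hI (stdE F j i) _ hEij).2
    rw [skewMul_stdE] at h1
    have h2 : (fun a b => if j = j ∧ a = i ∧ b = i then c i j i else 0)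
        = (c i j i) • stdE F i i := by
      funext a b; simp [stdE, mul_comm]
    rw [h2] at h1
    have := I.smul_mem (c i j i)⁻¹ h1
    rwa [smul_smul, inv_mul_cancel₀ (hreg i j), one_smul] at this
  -- stdE F l i ∈ I for all l
  have hEli : ∀ l, stdE F l i ∈ I := by
    intro l
    have h1 : skewMul c (stdE F l i) (stdE F i i) ∈ I := (hI (stdE F l i) _ hEii).1
    rw [skewMul_stdE] at h1
    have h2 : (fun a b => if i = i ∧ a = l ∧ b = i then c l i i else 0) = stdE F l i := by
      funext a b; simp [stdE, (hc l i).2]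
    rwa [h2] at h1
  -- stdE F l l ∈ I for all l
  have hEll : ∀ l, stdE F l l ∈ I := by
    intro l
    have h1 : skewMul c (stdE F l i) (stdE F i l) ∈ I := (hI (stdE F i l) _ (hEli l)).2
    rw [skewMul_stdE] at h1
    have h2 : (fun a b => if i = i ∧ a = l ∧ b = l then c l i l else 0)
        = (c l i l) • stdE F l l := by
      funext a b; simp [stdE, mul_comm]
    rw [h2] at h1
    have := I.smul_mem (c l i l)⁻¹ h1
    rwa [smul_smul, inv_mul_cancel₀ (hreg l i), one_smul] at this
  -- stdE F k l ∈ I for all k l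
  have hEkl : ∀ k l, stdE F k l ∈ I := by
    intro k l
    have h1 : skewMul c (stdE F k k) (stdE F k l) ∈ I := (hI (stdE F k l) _ (hEll k)).2
    rw [skewMul_stdE] at h1
    have h2 : (fun a b => if k = k ∧ a = k ∧ b = l then c k k l else 0) = stdE F k l := by
      funext a b; simp [stdE, (hc k l).1]
    rwa [h2] at h1
  -- conclude
  ext y
  simp only [Submodule.mem_top, iff_true]
  have hy : y = ∑ k : Fin n, ∑ l : Fin n, (y k l) • stdE F k l := by
    funext a b
    simp only [Finset.sum_apply, Pi.smul_apply, stdE, smul_eq_mul, mul_ite, mul_one, mul_zero]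
    simp [ite_and, Finset.sum_ite_eq]
  rw [hy]
  exact Submodule.sum_mem I fun k _ => Submodule.sum_mem I fun l _ =>
    I.smul_mem _ (hEkl k l)
end

section
/- In a skew matrix algebra A = M_n(F;c), if the matrix unit e_{ij} lies in any one-sided nucleus (left, middle, or right), then c_{jij} = c_{iji}; if e_{ij} lies in the left or middle nucleus then c_{ijk}c_{jik} = c_{iji} for all k; and if e_{ij} lies in the right or middle nucleus then c_{kij}c_{kji} = c_{iji} for all k. -/
open scoped BigOperators TensorProduct

section Aux

variable {F : Type*} [Field F] {n : ℕ} (c : Fin n → Fin n → Fin n → F)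

lemma skewMul_stdE_stdE (i j k l : Fin n) :
    skewMul c (stdE F i j) (stdE F k l)
      = fun a b => if j = k ∧ a = i ∧ b = l then c i j l else 0 := by
  funext a b
  simp only [skewMul, stdE]
  rw [Finset.sum_eq_single j]
  · by_cases hjk : j = k <;> by_cases hai : a = i <;> by_cases hbl : b = l <;>
      simp_all
  · intro m _ hm
    by_cases h : a = i ∧ m = j
    · exact absurd h.2 hm
    · simp [h]
  · simp

lemma skewMul_ite_stdE (s : F) (i j k l : Fin n) :
    skewMul c (fun a b => if a = i ∧ b = j then s else 0) (stdE F k l)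
      = fun a b => if j = k ∧ a = i ∧ b = l then s * c i j l else 0 := by
  funext a b
  simp only [skewMul, stdE]
  rw [Finset.sum_eq_single j]
  · by_cases hjk : j = k <;> by_cases hai : a = i <;> by_cases hbl : b = l <;>
      simp_all [mul_comm]
  · intro m _ hm
    by_cases h : a = i ∧ m = j
    · exact absurd h.2 hm
    · simp [h]
  · simp

lemma skewMul_stdE_ite (s : F) (i j k l : Fin n) :
    skewMul c (stdE F i j) (fun a b => if a = k ∧ b = l then s else 0)
      = fun a b => if j = k ∧ a = i ∧ b = l then s * c i j l else 0 := by
  funext a b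
  simp only [skewMul, stdE]
  rw [Finset.sum_eq_single j]
  · by_cases hjk : j = k <;> by_cases hai : a = i <;> by_cases hbl : b = l <;>
      simp_all [mul_comm]
  · intro m _ hm
    by_cases h : a = i ∧ m = j
    · exact absurd h.2 hm
    · simp [h]
  · simp

lemma lNuc_key {i j : Fin n} (h : stdE F i j ∈ lNuc c) (k l : Fin n) :
    c i j k * c i k l = c i j l * c j k l := by
  have := h (stdE F j k) (stdE F k l)
  rw [skewMul_stdE_stdE, skewMul_stdE_stdE] at this
  simp only [eq_self_iff_true, true_and] at this
  rw [skewMul_ite_stdE, skewMul_stdE_ite] at this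
  have h2 := congrFun (congrFun this i) l
  simp only [and_self, if_true] at h2
  linear_combination h2

lemma mNuc_key {i j : Fin n} (h : stdE F i j ∈ mNuc c) (p l : Fin n) :
    c p i j * c p j l = c p i l * c i j l := by
  have := h (stdE F p i) (stdE F j l)
  rw [skewMul_stdE_stdE, skewMul_stdE_stdE] at this
  simp only [eq_self_iff_true, true_and] at this
  rw [skewMul_ite_stdE, skewMul_stdE_ite] at this
  have h2 := congrFun (congrFun this p) l
  simp only [and_self, if_true] at h2
  linear_combination h2

lemma rNuc_key {i j : Fin n} (h : stdE F i j ∈ rNuc c) (p q : Fin n) :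
    c p q i * c p i j = c p q j * c q i j := by
  have := h (stdE F p q) (stdE F q i)
  rw [skewMul_stdE_stdE, skewMul_stdE_stdE] at this
  simp only [eq_self_iff_true, true_and] at this
  rw [skewMul_ite_stdE, skewMul_stdE_ite] at this
  have h2 := congrFun (congrFun this p) j
  simp only [and_self, if_true] at h2
  linear_combination h2

end Aux

/-- Necessary conditions on the skew set for a matrix unit `e_{ij}` to lie in a
one-sided nucleus of `M_n(F;c)`. -/
theorem stmt_16 {F : Type*} [Field F] {n : ℕ} (c : Fin n → Fin n → Fin n → F)
    (hc : IsReduced' c) (i j : Fin n) :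
    ((stdE F i j ∈ lNuc c ∨ stdE F i j ∈ mNuc c ∨ stdE F i j ∈ rNuc c) →
        c j i j = c i j i) ∧
    ((stdE F i j ∈ lNuc c ∨ stdE F i j ∈ mNuc c) →
        ∀ k, c i j k * c j i k = c i j i) ∧
    ((stdE F i j ∈ rNuc c ∨ stdE F i j ∈ mNuc c) →
        ∀ k, c k i j * c k j i = c i j i) := by
  refine ⟨?_, ?_, ?_⟩
  · rintro (h | h | h)
    · have := lNuc_key c h i j
      rw [(hc i j).1, (hc i j).2] at this
      linear_combination -this
    · have := mNuc_key c h j i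
      rw [(hc j i).1, (hc j i).2] at this
      linear_combination this
    · have := rNuc_key c h i j
      rw [(hc i j).1, (hc i j).2] at this
      linear_combination -this
  · rintro (h | h) k
    · have := lNuc_key c h i k
      rw [(hc i k).1] at this
      linear_combination -this
    · have h1 := mNuc_key c h j k
      have h2 : c j i j = c i j i := by
        have := mNuc_key c h j i
        rw [(hc j i).1, (hc j i).2] at this
        linear_combination this
      rw [(hc j k).1, h2] at h1
      linear_combination -h1
  · rintro (h | h) k
    · have h1 := rNuc_key c h k j
      have h2 : c j i j = c i j i := by
        have := rNuc_key c h i j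
        rw [(hc i j).1, (hc i j).2] at this
        linear_combination -this
      rw [(hc k j).2, h2] at h1
      linear_combination h1
    · have := mNuc_key c h k i
      rw [(hc k i).2] at this
      linear_combination this
end
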